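/- (Theorem 1.) Given query q ∈ ℝ^d, KV caches K, V ∈ ℝ^{n×d}, quantization errors ΔK, ΔV ∈ ℝ^{n×d}, projection matrix Wᵒ ∈ ℝ^{d×d}, and attention head h = softmax(qKᵀ/√d)·V·Wᵒ, the change Δh of the attention head is bounded by ‖Δh‖₂ ≤ C₁·‖ΔK‖_{2,∞}·‖ΔV‖_F + C₂·‖ΔK‖_{2,∞} + C₃·‖ΔV‖_F, where C₃ = ‖Wᵒ‖₂, C₁ = (n^{3/2}/√d)·C₃·‖q‖₂, and C₂ = C₁·‖V‖₂, assuming the softmax condition-number bound ‖softmax(x+Δx)−softmax(x)‖_∞ ≤ n‖Δx‖_∞ holds. -/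
import Mathlib


/-- The softmax function on ℝⁿ. -/
noncomputable def softmax {n : ℕ} (x : Fin n → ℝ) : Fin n → ℝ :=
  fun i => Real.exp (x i) / ∑ j, Real.exp (x j)

/-- The (2,∞) norm of a matrix: the maximal ℓ2 norm of a row. -/
noncomputable def rowMax {n d : ℕ} [NeZero n] (A : Matrix (Fin n) (Fin d) ℝ) : ℝ :=
  Finset.univ.sup' Finset.univ_nonempty fun i => Real.sqrt (∑ j, (A i j) ^ 2)

/-- The Frobenius norm of a real matrix. -/
noncomputable def frob {m k : ℕ} (A : Matrix (Fin m) (Fin k) ℝ) : ℝ :=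
  Real.sqrt (∑ i, ∑ j, (A i j) ^ 2)

/-- The operator (spectral) 2-norm of a real matrix. -/
noncomputable def spec {m k : ℕ} (A : Matrix (Fin m) (Fin k) ℝ) : ℝ :=
  ‖LinearMap.toContinuousLinearMap (Matrix.toEuclideanLin A)‖

open Matrix
open scoped Matrix.Norms.L2Operator

lemma euclid_norm_eq {k : ℕ} (f : Fin k → ℝ) :
    ‖(WithLp.equiv 2 (Fin k → ℝ)).symm f‖ = Real.sqrt (∑ j, (f j) ^ 2) := by
  rw [EuclideanSpace.norm_eq]
  congr 1
  simp [Real.norm_eq_abs, sq_abs]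

lemma spec_eq_l2 {m k : ℕ} (A : Matrix (Fin m) (Fin k) ℝ) : spec A = ‖A‖ := rfl

lemma vecMul_spec_bound {m k : ℕ} (A : Matrix (Fin m) (Fin k) ℝ) (y : Fin m → ℝ) :
    Real.sqrt (∑ j, (Matrix.vecMul y A j) ^ 2) ≤ spec A * Real.sqrt (∑ i, (y i) ^ 2) := by
  have h := Matrix.l2_opNorm_mulVec Aᵀ ((WithLp.equiv 2 (Fin m → ℝ)).symm y)
  have ht : ‖Aᵀ‖ = ‖A‖ := by
    rw [← Matrix.conjTranspose_eq_transpose_of_trivial]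
    exact Matrix.l2_opNorm_conjTranspose A
  rw [spec_eq_l2, ← euclid_norm_eq, ← euclid_norm_eq, ← ht]
  have he : Aᵀ.mulVec ((WithLp.equiv 2 (Fin m → ℝ)).symm y) = Matrix.vecMul y A := by
    ext j; simp [Matrix.mulVec, Matrix.vecMul, dotProduct, mul_comm]
  rw [← he]
  exact h

lemma softmax_nonneg {n : ℕ} (x : Fin n → ℝ) (i : Fin n) : 0 ≤ softmax x i := by
  unfold softmax
  positivity

lemma softmax_sum_one {n : ℕ} [NeZero n] (x : Fin n → ℝ) : ∑ i, softmax x i = 1 := by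
  unfold softmax
  rw [← Finset.sum_div]
  exact div_self (ne_of_gt (Finset.sum_pos (fun j _ => Real.exp_pos _) Finset.univ_nonempty))

lemma softmax_le_one {n : ℕ} [NeZero n] (x : Fin n → ℝ) (i : Fin n) : softmax x i ≤ 1 := by
  have h := softmax_sum_one x
  have := Finset.single_le_sum (f := softmax x) (fun j _ => softmax_nonneg x j) (Finset.mem_univ i)
  linarith

lemma softmax_sq_sum_le_one {n : ℕ} [NeZero n] (x : Fin n → ℝ) :
    ∑ i, (softmax x i) ^ 2 ≤ 1 := by
  calc ∑ i, (softmax x i) ^ 2 ≤ ∑ i, softmax x i := by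
        apply Finset.sum_le_sum
        intro i _
        nlinarith [softmax_nonneg x i, softmax_le_one x i]
    _ = 1 := softmax_sum_one x

-- ℓ2 norm of s·ΔV bounded by frob, for s with ∑ s² ≤ 1
lemma vecMul_frob_bound {n d : ℕ} (s : Fin n → ℝ) (hs : ∑ i, (s i) ^ 2 ≤ 1)
    (A : Matrix (Fin n) (Fin d) ℝ) :
    Real.sqrt (∑ j, (Matrix.vecMul s A j) ^ 2) ≤ frob A := by
  unfold frob
  apply Real.sqrt_le_sqrt
  rw [Finset.sum_comm]
  apply Finset.sum_le_sum
  intro j _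
  calc (Matrix.vecMul s A j) ^ 2 = (∑ i, s i * A i j) ^ 2 := by
        simp [Matrix.vecMul, dotProduct]
    _ ≤ (∑ i, (s i) ^ 2) * (∑ i, (A i j) ^ 2) :=
        Finset.sum_mul_sq_le_sq_mul_sq _ _ _
    _ ≤ 1 * (∑ i, (A i j) ^ 2) := by
        apply mul_le_mul_of_nonneg_right hs
        positivity
    _ = ∑ i, (A i j) ^ 2 := one_mul _

lemma le_rowMax {n d : ℕ} [NeZero n] (A : Matrix (Fin n) (Fin d) ℝ) (i : Fin n) :
    Real.sqrt (∑ j, (A i j) ^ 2) ≤ rowMax A := by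
  unfold rowMax
  exact Finset.le_sup' (fun i => Real.sqrt (∑ j, (A i j) ^ 2)) (Finset.mem_univ i)

lemma rowMax_nonneg {n d : ℕ} [NeZero n] (A : Matrix (Fin n) (Fin d) ℝ) : 0 ≤ rowMax A := by
  obtain ⟨i⟩ := (inferInstance : Nonempty (Fin n))
  exact le_trans (Real.sqrt_nonneg _) (le_rowMax A i)

lemma frob_nonneg {m k : ℕ} (A : Matrix (Fin m) (Fin k) ℝ) : 0 ≤ frob A := Real.sqrt_nonneg _

lemma spec_nonneg {m k : ℕ} (A : Matrix (Fin m) (Fin k) ℝ) : 0 ≤ spec A := norm_nonneg _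

lemma abs_sum_mul_le {d : ℕ} (f g : Fin d → ℝ) :
    |∑ j, f j * g j| ≤ Real.sqrt (∑ j, (f j) ^ 2) * Real.sqrt (∑ j, (g j) ^ 2) := by
  rw [← Real.sqrt_sq_eq_abs, ← Real.sqrt_mul (by positivity)]
  exact Real.sqrt_le_sqrt (Finset.sum_mul_sq_le_sq_mul_sq _ _ _)

lemma l2_le_sqrt_card_mul_sup {n : ℕ} (f : Fin n → ℝ) :
    Real.sqrt (∑ i, (f i) ^ 2) ≤ Real.sqrt n * ‖f‖ := by
  rw [← Real.sqrt_sq (norm_nonneg f), ← Real.sqrt_mul (Nat.cast_nonneg n)]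
  apply Real.sqrt_le_sqrt
  calc ∑ i, (f i) ^ 2 ≤ ∑ _i : Fin n, ‖f‖ ^ 2 := by
        apply Finset.sum_le_sum
        intro i _
        have h : |f i| ≤ ‖f‖ := by
          simpa [Real.norm_eq_abs] using norm_le_pi_norm f i
        nlinarith [abs_nonneg (f i), sq_abs (f i)]
    _ = n * ‖f‖ ^ 2 := by simp [Finset.sum_const, nsmul_eq_mul]

lemma dx_sup_bound {n d : ℕ} [NeZero n] (hd : 1 ≤ d) (q : Fin d → ℝ)
    (ΔK : Matrix (Fin n) (Fin d) ℝ) :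
    ‖fun i => (∑ j, q j * ΔK i j) / Real.sqrt d‖ ≤
      Real.sqrt (∑ j, (q j) ^ 2) * rowMax ΔK / Real.sqrt d := by
  have hd0 : (0:ℝ) < Real.sqrt d := Real.sqrt_pos.2 (by exact_mod_cast Nat.lt_of_lt_of_le Nat.zero_lt_one hd)
  apply pi_norm_le_iff_of_nonneg ?hnn |>.2
  case hnn =>
    have := rowMax_nonneg ΔK
    have := Real.sqrt_nonneg (∑ j, (q j) ^ 2)
    positivity
  intro i
  rw [Real.norm_eq_abs, abs_div, abs_of_nonneg (Real.sqrt_nonneg (d : ℝ))]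
  apply div_le_div_of_nonneg_right ?_ hd0.le
  calc |∑ j, q j * ΔK i j| ≤ Real.sqrt (∑ j, (q j) ^ 2) * Real.sqrt (∑ j, (ΔK i j) ^ 2) :=
        abs_sum_mul_le q (ΔK i)
    _ ≤ Real.sqrt (∑ j, (q j) ^ 2) * rowMax ΔK :=
        mul_le_mul_of_nonneg_left (le_rowMax ΔK i) (Real.sqrt_nonneg _)

lemma sqrt_sum_sq_add_le {k : ℕ} (u v : Fin k → ℝ) :
    Real.sqrt (∑ j, ((u + v) j) ^ 2) ≤
      Real.sqrt (∑ j, (u j) ^ 2) + Real.sqrt (∑ j, (v j) ^ 2) := by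
  rw [← euclid_norm_eq, ← euclid_norm_eq, ← euclid_norm_eq]
  exact norm_add_le ((WithLp.equiv 2 (Fin k → ℝ)).symm u) ((WithLp.equiv 2 (Fin k → ℝ)).symm v)


/-- Theorem 1: the change of the attention head h = softmax(qKᵀ/√d)·V·Wᵒ under
KV-cache errors ΔK, ΔV is bounded by
‖Δh‖₂ ≤ C₁‖ΔK‖_{2,∞}‖ΔV‖_F + C₂‖ΔK‖_{2,∞} + C₃‖ΔV‖_F, where C₃ = ‖Wᵒ‖₂,
C₁ = (n^{3/2}/√d)·C₃·‖q‖₂, C₂ = C₁‖V‖₂, given the softmax condition-number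
bound ‖softmax(x+Δx) − softmax(x)‖_∞ ≤ n‖Δx‖_∞ (sup norms on `Fin n → ℝ`). -/
theorem attention_head_quantization_error_bound (n d : ℕ) [NeZero n] (hd : 1 ≤ d)
    (q : Fin d → ℝ) (K V ΔK ΔV : Matrix (Fin n) (Fin d) ℝ)
    (W : Matrix (Fin d) (Fin d) ℝ)
    (hcond : ∀ x Δx : Fin n → ℝ, ‖softmax (x + Δx) - softmax x‖ ≤ n * ‖Δx‖) :
    Real.sqrt (∑ j,
      ((Matrix.vecMul (softmax fun i => (∑ j, q j * (K + ΔK) i j) / Real.sqrt d)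
          ((V + ΔV) * W)
        - Matrix.vecMul (softmax fun i => (∑ j, q j * K i j) / Real.sqrt d)
          (V * W)) j) ^ 2) ≤
      (((n : ℝ) ^ ((3 : ℝ) / 2) / Real.sqrt d) * spec W * Real.sqrt (∑ j, (q j) ^ 2))
          * rowMax ΔK * frob ΔV
        + (((n : ℝ) ^ ((3 : ℝ) / 2) / Real.sqrt d) * spec W * Real.sqrt (∑ j, (q j) ^ 2)
            * spec V) * rowMax ΔK
        + spec W * frob ΔV := by
  set x : Fin n → ℝ := fun i => (∑ j, q j * K i j) / Real.sqrt d with hx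
  set Δx : Fin n → ℝ := fun i => (∑ j, q j * ΔK i j) / Real.sqrt d with hΔx
  have hxadd : (fun i => (∑ j, q j * (K + ΔK) i j) / Real.sqrt d) = x + Δx := by
    funext i
    simp only [hx, hΔx, Matrix.add_apply, mul_add, Finset.sum_add_distrib, add_div, Pi.add_apply]
  rw [hxadd]
  set s' : Fin n → ℝ := softmax (x + Δx) with hs'
  set s : Fin n → ℝ := softmax x with hs
  set Q : ℝ := Real.sqrt (∑ j, (q j) ^ 2) with hQ
  have hdec : Matrix.vecMul s' ((V + ΔV) * W) - Matrix.vecMul s (V * W)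
      = Matrix.vecMul (s' - s) (V * W) + Matrix.vecMul s' (ΔV * W) := by
    rw [Matrix.add_mul, Matrix.vecMul_add, Matrix.sub_vecMul]
    abel
  have htri : Real.sqrt (∑ j,
        ((Matrix.vecMul s' ((V + ΔV) * W) - Matrix.vecMul s (V * W)) j) ^ 2)
      ≤ Real.sqrt (∑ j, (Matrix.vecMul (s' - s) (V * W) j) ^ 2)
        + Real.sqrt (∑ j, (Matrix.vecMul s' (ΔV * W) j) ^ 2) := by
    rw [hdec]
    exact sqrt_sum_sq_add_le _ _
  -- bound on the (s' - s) part
  have hA : Real.sqrt (∑ j, (Matrix.vecMul (s' - s) (V * W) j) ^ 2)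
      ≤ spec W * (spec V * Real.sqrt (∑ i, ((s' - s) i) ^ 2)) := by
    rw [← Matrix.vecMul_vecMul]
    exact (vecMul_spec_bound W _).trans
      (mul_le_mul_of_nonneg_left (vecMul_spec_bound V _) (spec_nonneg W))
  have hss : Real.sqrt (∑ i, ((s' - s) i) ^ 2)
      ≤ Real.sqrt n * ((n : ℝ) * (Q * rowMax ΔK / Real.sqrt d)) := by
    refine (l2_le_sqrt_card_mul_sup _).trans ?_
    have h1 : ‖s' - s‖ ≤ (n : ℝ) * ‖Δx‖ := hcond x Δx
    have h2 : ‖Δx‖ ≤ Q * rowMax ΔK / Real.sqrt d := dx_sup_bound hd q ΔK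
    have hn0 : (0 : ℝ) ≤ (n : ℝ) := Nat.cast_nonneg n
    have := mul_le_mul_of_nonneg_left h2 hn0
    have := h1.trans this
    exact mul_le_mul_of_nonneg_left this (Real.sqrt_nonneg n)
  -- bound on the ΔV part
  have hB : Real.sqrt (∑ j, (Matrix.vecMul s' (ΔV * W) j) ^ 2) ≤ spec W * frob ΔV := by
    rw [← Matrix.vecMul_vecMul]
    exact (vecMul_spec_bound W _).trans
      (mul_le_mul_of_nonneg_left
        (vecMul_frob_bound s' (softmax_sq_sum_le_one (x + Δx)) ΔV) (spec_nonneg W))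
  -- arithmetic
  have hnpos : (0 : ℝ) < (n : ℝ) := by
    exact_mod_cast Nat.pos_of_ne_zero (NeZero.ne n)
  have hpow : (n : ℝ) ^ ((3 : ℝ) / 2) = Real.sqrt n * n := by
    rw [Real.sqrt_eq_rpow, show (3 : ℝ) / 2 = 1 / 2 + 1 by norm_num, Real.rpow_add hnpos,
      Real.rpow_one]
  have heq : spec W * (spec V * (Real.sqrt n * ((n : ℝ) * (Q * rowMax ΔK / Real.sqrt d))))
      = (((n : ℝ) ^ ((3 : ℝ) / 2) / Real.sqrt d) * spec W * Q * spec V) * rowMax ΔK := by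
    rw [hpow]; ring
  have hpos1 : 0 ≤ (((n : ℝ) ^ ((3 : ℝ) / 2) / Real.sqrt d) * spec W * Q) * rowMax ΔK
      * frob ΔV := by
    have h1 : (0:ℝ) ≤ (n : ℝ) ^ ((3 : ℝ) / 2) / Real.sqrt d := by positivity
    exact mul_nonneg (mul_nonneg (mul_nonneg (mul_nonneg h1 (spec_nonneg W))
      (Real.sqrt_nonneg _)) (rowMax_nonneg ΔK)) (frob_nonneg ΔV)
  have hA' := hA.trans (mul_le_mul_of_nonneg_left
    (mul_le_mul_of_nonneg_left hss (spec_nonneg V)) (spec_nonneg W))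
  rw [heq] at hA'
  linarith [htri, hA', hB]
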